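/- arXiv:2506.16106 — 3 statements merged into one kernel-verified Lean document; each statement's English description precedes it below -/
import Mathlib

section
/- For any complex numbers ξ, η, a, b, one has |ξa - ηb|² + |ξb - η̄a|² ≤ (|ξ| + |η|)²(|a|² + |b|²). -/
/-- For complex `ξ, η, a, b`:
`|ξa - ηb|² + |ξb - η̄a|² ≤ (|ξ| + |η|)² (|a|² + |b|²)`. -/
theorem stmt_3 (ξ η a b : ℂ) :
    ‖ξ * a - η * b‖ ^ 2 + ‖ξ * b - (starRingEnd ℂ) η * a‖ ^ 2 ≤
      (‖ξ‖ + ‖η‖) ^ 2 * (‖a‖ ^ 2 + ‖b‖ ^ 2) := by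
  have h1 : ‖ξ * a - η * b‖ ≤ ‖ξ‖ * ‖a‖ + ‖η‖ * ‖b‖ :=
    (norm_sub_le _ _).trans (by simp [norm_mul])
  have h2 : ‖ξ * b - (starRingEnd ℂ) η * a‖ ≤ ‖ξ‖ * ‖b‖ + ‖η‖ * ‖a‖ :=
    (norm_sub_le _ _).trans (by simp [norm_mul])
  nlinarith [norm_nonneg (ξ * a - η * b), norm_nonneg (ξ * b - (starRingEnd ℂ) η * a),
    norm_nonneg ξ, norm_nonneg η, norm_nonneg a, norm_nonneg b,
    sq_nonneg (‖a‖ - ‖b‖), mul_nonneg (norm_nonneg ξ) (norm_nonneg η),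
    sq_nonneg (‖ξ‖*‖a‖ + ‖η‖*‖b‖), sq_nonneg (‖ξ‖*‖b‖ + ‖η‖*‖a‖)]
end

section
/- For any complex numbers θ, ς, a, b, one has |θa - ςb|² + |θb - ς̄a|² ≥ (|θ| - |ς|)²(|a|² + |b|²). -/
/-! By the reverse triangle inequality the left side is at least
`(|θ||a| - |ς||b|)² + (|θ||b| - |ς||a|)²`, and this exceeds `(|θ| - |ς|)²(|a|² + |b|²)`
by exactly `2|θ||ς|(|a| - |b|)² ≥ 0`. -/

theorem sq_norm_sub_norm_le_sq_norm_sub {E : Type*} [SeminormedAddCommGroup E] (x y : E) :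
    (‖x‖ - ‖y‖) ^ 2 ≤ ‖x - y‖ ^ 2 :=
  sq_le_sq.mpr <| (abs_norm_sub_norm_le x y).trans_eq (abs_norm _).symm

theorem sub_sq_mul_add_sq_le {t s x y : ℝ} (hts : 0 ≤ t * s) :
    (t - s) ^ 2 * (x ^ 2 + y ^ 2) ≤ (t * x - s * y) ^ 2 + (t * y - s * x) ^ 2 := by
  have key : (t * x - s * y) ^ 2 + (t * y - s * x) ^ 2 - (t - s) ^ 2 * (x ^ 2 + y ^ 2)
      = 2 * (t * s) * (x - y) ^ 2 := by ring
  rw [← sub_nonneg, key]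
  positivity

/-- For complex `θ, ς, a, b`:
`|θa - ςb|² + |θb - ς̄a|² ≥ (|θ| - |ς|)² (|a|² + |b|²)`. -/
theorem stmt_4 (θ ς a b : ℂ) :
    ‖θ * a - ς * b‖ ^ 2 + ‖θ * b - (starRingEnd ℂ) ς * a‖ ^ 2 ≥
      (‖θ‖ - ‖ς‖) ^ 2 * (‖a‖ ^ 2 + ‖b‖ ^ 2) := by
  calc (‖θ‖ - ‖ς‖) ^ 2 * (‖a‖ ^ 2 + ‖b‖ ^ 2)
      ≤ (‖θ‖ * ‖a‖ - ‖ς‖ * ‖b‖) ^ 2 + (‖θ‖ * ‖b‖ - ‖ς‖ * ‖a‖) ^ 2 :=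
        sub_sq_mul_add_sq_le (by positivity)
    _ ≤ ‖θ * a - ς * b‖ ^ 2 + ‖θ * b - (starRingEnd ℂ) ς * a‖ ^ 2 := by
        refine add_le_add ?_ ?_
        · simpa only [norm_mul] using sq_norm_sub_norm_le_sq_norm_sub (θ * a) (ς * b)
        · simpa only [norm_mul, Complex.norm_conj] using
            sq_norm_sub_norm_le_sq_norm_sub (θ * b) (starRingEnd ℂ ς * a)
end

section
/- Let A ∈ C^{m×n} with nonzero columns and z ∈ C^m with A* z ≠ 0. Suppose the column index i attains the maximum of |A_{(i)}* z|²/‖A_{(i)}‖², that ‖A‖_F² > min_l ‖A_{(l)}‖², and that A_{(j)}* z = 0 for some column j ≠ i. Then |A_{(i)}* z|²/‖A_{(i)}‖² ≥ ‖A* z‖² / (‖A‖_F² - min_l ‖A_{(l)}‖²). -/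
open Matrix Finset

/-- If column `i` maximizes `|A_{(i)}* z|²/‖A_{(i)}‖²`, `A* z ≠ 0`, and some
column `j ≠ i` satisfies `A_{(j)}* z = 0`, then
`|A_{(i)}* z|²/‖A_{(i)}‖² ≥ ‖A* z‖² / (‖A‖_F² - min_l ‖A_{(l)}‖²)`. -/
theorem stmt_11 {m n : ℕ} (hn : 2 ≤ n) (A : Matrix (Fin m) (Fin n) ℂ)
    (hcols : ∀ i : Fin n, (fun k => A k i) ≠ 0)
    (z : Fin m → ℂ) (hz : Aᴴ.mulVec z ≠ 0)
    (i : Fin n)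
    (hi : ∀ l : Fin n,
      ‖∑ k, (starRingEnd ℂ) (A k i) * z k‖ ^ 2 / ∑ k, ‖A k i‖ ^ 2 ≥
        ‖∑ k, (starRingEnd ℂ) (A k l) * z k‖ ^ 2 / ∑ k, ‖A k l‖ ^ 2)
    (j : Fin n) (hji : j ≠ i)
    (hjz : ∑ k, (starRingEnd ℂ) (A k j) * z k = 0)
    (hF : (∑ l : Fin n, ∑ k, ‖A k l‖ ^ 2) >
      Finset.univ.inf' ⟨i, Finset.mem_univ _⟩
        (fun l : Fin n => ∑ k, ‖A k l‖ ^ 2)) :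
    ‖∑ k, (starRingEnd ℂ) (A k i) * z k‖ ^ 2 / ∑ k, ‖A k i‖ ^ 2 ≥
      (∑ l : Fin n, ‖∑ k, (starRingEnd ℂ) (A k l) * z k‖ ^ 2) /
        ((∑ l : Fin n, ∑ k, ‖A k l‖ ^ 2) -
          Finset.univ.inf' ⟨i, Finset.mem_univ _⟩
            (fun l : Fin n => ∑ k, ‖A k l‖ ^ 2)) := by
  set c : Fin n → ℝ := fun l => ‖∑ k, (starRingEnd ℂ) (A k l) * z k‖ ^ 2 with hc
  set w : Fin n → ℝ := fun l => ∑ k, ‖A k l‖ ^ 2 with hw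
  have wpos : ∀ l, 0 < w l := by
    intro l
    have h := hcols l
    have : ∃ k, A k l ≠ 0 := by
      by_contra hcon
      push_neg at hcon
      exact h (funext fun k => hcon k)
    obtain ⟨k, hk⟩ := this
    refine Finset.sum_pos' (fun k _ => by positivity) ⟨k, Finset.mem_univ _, ?_⟩
    have : 0 < ‖A k l‖ := norm_pos_iff.mpr hk
    positivity
  have cnonneg : ∀ l, 0 ≤ c l := fun l => by positivity
  set r : ℝ := c i / w i with hr
  have rnonneg : 0 ≤ r := div_nonneg (cnonneg i) (wpos i).le
  have hcl : ∀ l, c l ≤ r * w l := by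
    intro l
    have := hi l
    calc c l = c l / w l * w l := (div_mul_cancel₀ _ (wpos l).ne').symm
    _ ≤ r * w l := mul_le_mul_of_nonneg_right this (wpos l).le
  set M : ℝ := Finset.univ.inf' ⟨i, Finset.mem_univ _⟩ w with hM
  have hMj : M ≤ w j := Finset.inf'_le _ (Finset.mem_univ _)
  have hcj : c j = 0 := by simp [hc, hjz]
  have hsum : (∑ l, c l) ≤ r * ((∑ l, w l) - M) := by
    have h1 : (∑ l, c l) = ∑ l ∈ Finset.univ.erase j, c l := by
      rw [Finset.sum_erase _ hcj]
    have h2 : (∑ l ∈ Finset.univ.erase j, c l) ≤ r * ∑ l ∈ Finset.univ.erase j, w l := by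
      rw [Finset.mul_sum]
      exact Finset.sum_le_sum fun l _ => hcl l
    have h3 : (∑ l ∈ Finset.univ.erase j, w l) = (∑ l, w l) - w j := by
      rw [Finset.sum_erase_eq_sub (Finset.mem_univ _)]
    have h4 : (∑ l, w l) - w j ≤ (∑ l, w l) - M := by linarith
    calc (∑ l, c l) = ∑ l ∈ Finset.univ.erase j, c l := h1
    _ ≤ r * ∑ l ∈ Finset.univ.erase j, w l := h2
    _ ≤ r * ((∑ l, w l) - M) := by rw [h3]; exact mul_le_mul_of_nonneg_left h4 rnonneg
  have hpos : 0 < (∑ l, w l) - M := sub_pos.mpr hF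
  exact (div_le_iff₀ hpos).mpr hsum
end
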